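/- A pair (s,C) lies in the least fixed point WinM := ⋃_i WinM_i of the iteration WinM₀ := Base, WinM_{i+1} := WinM_i ∪ PreMC(WinM_i) if and only if there exists a (history-based) strategy g : List X → Y such that every infinite input sequence ξ : ℕ → X induces a play starting at s that reaches, after finitely many steps, a state s' with (s',C) ∈ Base. -/

import Mathlib

/-! A strategy winning from `WinM_{i+1} \ WinM_i` plays the action witnessing `PreMC` and then,
after seeing the first input `x`, follows a strategy winning from `δ s y x`, which lies in
`WinM_i`. Conversely, for finite `X` the union of the `WinM_i` is closed under `PreMC`, so from a
pair outside it every action admits an input staying outside; answering a given strategy this way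
forever yields an input sequence whose play never meets `Base`. -/

def PreMC {S Φ X Y : Type*} (δ : S → Y → X → S) (E : Set (S × Set Φ)) :
    Set (S × Set Φ) :=
  {p | ∃ y : Y, ∀ x : X, (δ p.1 y x, p.2) ∈ E}

def WinM {S Φ X Y : Type*} (δ : S → Y → X → S) (Base : Set (S × Set Φ)) :
    ℕ → Set (S × Set Φ)
  | 0 => Base
  | i + 1 => WinM δ Base i ∪ PreMC δ (WinM δ Base i)

def play {S X Y : Type*} (δ : S → Y → X → S) (g : List X → Y) (ξ : ℕ → X)
    (s : S) : ℕ → S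
  | 0 => s
  | t + 1 => δ (play δ g ξ s t) (g ((List.range t).map ξ)) (ξ t)

section

variable {S Φ X Y : Type*} (δ : S → Y → X → S)

lemma winM_mono (Base : Set (S × Set Φ)) : Monotone (WinM δ Base) :=
  monotone_nat_of_le_succ fun _ => Set.subset_union_left

lemma preMC_iUnion_subset_of_monotone [Finite X] {E : ℕ → Set (S × Set Φ)} (hE : Monotone E) :
    PreMC δ (⋃ i, E i) ⊆ ⋃ i, PreMC δ (E i) := by
  rintro ⟨s, C⟩ ⟨y, hy⟩
  choose index h_index using fun x => Set.mem_iUnion.mp (hy x)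
  obtain ⟨N, hN⟩ := (Set.finite_range index).bddAbove
  exact Set.mem_iUnion.mpr
    ⟨N, y, fun x => hE (hN (Set.mem_range_self x)) (h_index x)⟩

lemma preMC_iUnion_winM_subset [Finite X] (Base : Set (S × Set Φ)) :
    PreMC δ (⋃ i, WinM δ Base i) ⊆ ⋃ i, WinM δ Base i :=
  (preMC_iUnion_subset_of_monotone δ (winM_mono δ Base)).trans
    (Set.iUnion_mono' fun i => ⟨i + 1, Set.subset_union_right⟩)

lemma play_succ_eq_play_tail (g : List X → Y) (ξ : ℕ → X) (s : S) (t : ℕ) :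
    play δ g ξ s (t + 1) =
      play δ (fun l => g (ξ 0 :: l)) (fun n => ξ (n + 1)) (δ s (g []) (ξ 0)) t := by
  induction t with
  | zero => rfl
  | succ t ih =>
    have history :
        (List.range (t + 1)).map ξ = ξ 0 :: (List.range t).map (fun n => ξ (n + 1)) := by
      simp only [List.range_succ_eq_map, List.map_cons, List.map_map]
      rfl
    rw [play, ih, history]
    rfl

lemma exists_strategy_of_mem_winM [Nonempty Y] (Base : Set (S × Set Φ)) (i : ℕ) {s : S}
    {C : Set Φ} (h : (s, C) ∈ WinM δ Base i) :
    ∃ g : List X → Y, ∀ ξ : ℕ → X, ∃ k, (play δ g ξ s k, C) ∈ Base := by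
  induction i generalizing s with
  | zero => exact ⟨fun _ => Classical.arbitrary Y, fun _ => ⟨0, h⟩⟩
  | succ i ih =>
    rcases h with h | ⟨y, hy⟩
    · exact ih h
    · choose next h_next using fun x => ih (hy x)
      let g : List X → Y
        | [] => y
        | x :: l => next x l
      refine ⟨g, fun ξ => ?_⟩
      obtain ⟨k, hk⟩ := h_next (ξ 0) (fun n => ξ (n + 1))
      exact ⟨k + 1, by rw [play_succ_eq_play_tail]; exact hk⟩

lemma exists_forall_play_not_mem {W : Set (S × Set Φ)} (hW : PreMC δ W ⊆ W) {s : S}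
    {C : Set Φ} (hs : (s, C) ∉ W) (g : List X → Y) :
    ∃ ξ : ℕ → X, ∀ t, (play δ g ξ s t, C) ∉ W := by
  let Lose := {s' : S // (s', C) ∉ W}
  have escape (p : Lose) (y : Y) : ∃ x, (δ p.1 y x, C) ∉ W := by
    by_contra! h
    exact p.2 (hW ⟨y, h⟩)
  choose bad h_bad using escape
  -- the current losing state together with the inputs played so far
  let F : ℕ → Lose × List X := fun t => Nat.rec (⟨s, hs⟩, [])
    (fun _ p => (⟨_, h_bad p.1 (g p.2)⟩, p.2 ++ [bad p.1 (g p.2)])) t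
  let ξ : ℕ → X := fun t => bad (F t).1 (g (F t).2)
  have history (t : ℕ) : (F t).2 = (List.range t).map ξ := by
    induction t with
    | zero => rfl
    | succ t ih => simp only [F, List.range_succ, List.map_append, ← ih]; rfl
  have state (t : ℕ) : ((F t).1 : S) = play δ g ξ s t := by
    induction t with
    | zero => rfl
    | succ t ih => rw [play, ← ih, ← history]
  exact ⟨ξ, fun t => state t ▸ (F t).1.2⟩

end

theorem winM_iff_strategy_general
    {S Φ X Y : Type*} [Fintype X] [Nonempty Y]
    (δ : S → Y → X → S) (Base : Set (S × Set Φ)) (s : S) (C : Set Φ) :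
    (s, C) ∈ ⋃ i, WinM δ Base i ↔
      ∃ g : List X → Y, ∀ ξ : ℕ → X, ∃ k : ℕ, (play δ g ξ s k, C) ∈ Base := by
  constructor
  · intro h
    obtain ⟨i, hi⟩ := Set.mem_iUnion.mp h
    exact exists_strategy_of_mem_winM δ Base i hi
  · rintro ⟨g, h_reach⟩
    by_contra h_out
    obtain ⟨ξ, h_avoid⟩ :=
      exists_forall_play_not_mem δ (preMC_iUnion_winM_subset δ Base) h_out g
    obtain ⟨k, hk⟩ := h_reach ξ
    exact h_avoid k (Set.mem_iUnion.mpr ⟨0, hk⟩)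

theorem winM_iff_strategy
    {S Φ X Y : Type*} [Fintype S] [Fintype Φ] [Fintype X] [Fintype Y] [Nonempty Y]
    (δ : S → Y → X → S) (Base : Set (S × Set Φ)) (s : S) (C : Set Φ) :
    (s, C) ∈ ⋃ i, WinM δ Base i ↔
      ∃ g : List X → Y, ∀ ξ : ℕ → X, ∃ k : ℕ, (play δ g ξ s k, C) ∈ Base :=
  winM_iff_strategy_general δ Base s C
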